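/- Assume (H1), (H3)–(H5), (H8), and let (Y_n^{(0)}, Z_n^{(0)}) solve the stochastic Skorokhod problem SP({ΣU_k}, R) with U_k = A_k c − X_k. Then almost surely there exists a random ℝ₊ᵈ-valued H₀ with Y_n^{(0)} ≪ H₀ for all n ≥ 0, and almost surely ΔY_n^{(0)} = 0 for all sufficiently large n; that is, Y_n^{(0)} is almost surely eventually constant. -/

import Mathlib

/-!
Pathwise, the Skorokhod problem gives `z n = S n + (1 - Pᵀ) y n` with `S n` the partial sums of
the increments, and `y` increases only in coordinates where `z` vanishes. Hence `y n ≤ Pᵀ y n - b`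
for any lower bound `b` of `S`. Perron–Frobenius (a nonnegative matrix with a nonzero nonnegative
vector `v ≤ Q v` has a real eigenvalue `≥ 1`) and `spectralRadius ℝ P < 1` then bound `y`. By the
strong law `S n → +∞` coordinatewise almost surely, so `b` exists, and once `S n` exceeds `Pᵀ` applied
to the bound, `z n > 0` in every coordinate and `y` stops moving.
-/

open Matrix Finset MeasureTheory ProbabilityTheory

noncomputable section

/-- A pair `(ξ, ζ)` solves the linear complementarity problem `LCP(η, M)`. -/
def IsLCPSol {d : ℕ} (M : Matrix (Fin d) (Fin d) ℝ) (η ξ ζ : Fin d → ℝ) : Prop :=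
  ζ = η + M *ᵥ ξ ∧ (∀ i, 0 ≤ ξ i) ∧ (∀ i, 0 ≤ ζ i) ∧ ξ ⬝ᵥ ζ = 0

/-- `(y, z)` solves the Skorokhod problem `SP({a + Σ u_n}, M)` in the orthant. -/
def IsSPSol {d : ℕ} (M : Matrix (Fin d) (Fin d) ℝ) (a : Fin d → ℝ)
    (u y z : ℕ → Fin d → ℝ) : Prop :=
  y 0 = 0 ∧ z 0 = a ∧
  ∀ n, 1 ≤ n →
    z n = z (n - 1) + u n + M *ᵥ (y n - y (n - 1)) ∧
    (∀ i, 0 ≤ z n i) ∧ (∀ i, 0 ≤ y n i - y (n - 1) i) ∧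
    z n ⬝ᵥ (y n - y (n - 1)) = 0

open Filter Topology

theorem inv_sum_smul_mem_stdSimplex {n : Type*} [Fintype n] {w : n → ℝ} (hw : 0 ≤ w)
    (hsum : 0 < ∑ i, w i) : (∑ i, w i)⁻¹ • w ∈ stdSimplex ℝ n :=
  ⟨fun i => mul_nonneg (inv_nonneg.2 hsum.le) (hw i), by
    simp only [Pi.smul_apply, smul_eq_mul, ← mul_sum, inv_mul_cancel₀ hsum.ne']⟩

namespace Matrix

variable {n : Type*} [Fintype n]

theorem mulVec_mono_of_nonneg {Q : Matrix n n ℝ} (hQ : ∀ i j, 0 ≤ Q i j) :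
    Monotone (Q *ᵥ ·) := fun _ _ hxy i =>
  sum_le_sum fun j _ => mul_le_mul_of_nonneg_left (hxy j) (hQ i j)

theorem mulVec_nonneg_of_nonneg {Q : Matrix n n ℝ} (hQ : ∀ i j, 0 ≤ Q i j) {x : n → ℝ}
    (hx : 0 ≤ x) : 0 ≤ Q *ᵥ x := by
  simpa using mulVec_mono_of_nonneg hQ hx

theorem mulVec_pos_of_pos {B : Matrix n n ℝ} (hB : ∀ i j, 0 < B i j) {x : n → ℝ}
    (hx : 0 ≤ x) (hx0 : x ≠ 0) (i : n) : 0 < (B *ᵥ x) i := by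
  obtain ⟨j, hj⟩ := Function.ne_iff.1 hx0
  exact sum_pos' (fun k _ => mul_nonneg (hB i k).le (hx k))
    ⟨j, mem_univ j, mul_pos (hB i j) ((hx j).lt_of_ne' hj)⟩

theorem spectrum_transpose [DecidableEq n] (Q : Matrix n n ℝ) :
    spectrum ℝ Qᵀ = spectrum ℝ Q := by
  ext t
  rw [mem_spectrum_iff_isRoot_charpoly, mem_spectrum_iff_isRoot_charpoly, charpoly_transpose]

theorem le_sum_of_smul_le_mulVec {B : Matrix n n ℝ} (hB : ∀ i j, 0 ≤ B i j) {t : ℝ}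
    {u : n → ℝ} (hu : u ∈ stdSimplex ℝ n) (htu : t • u ≤ B *ᵥ u) :
    t ≤ ∑ i, ∑ j, B i j :=
  calc t = ∑ i, t * u i := by rw [← mul_sum, hu.2, mul_one]
    _ ≤ ∑ i, (B *ᵥ u) i := sum_le_sum fun i _ => htu i
    _ ≤ ∑ i, ∑ j, B i j := sum_le_sum fun i _ => sum_le_sum fun j _ =>
        mul_le_of_le_one_right (hB i j)
          ((single_le_sum (fun k _ => hu.1 k) (mem_univ j)).trans_eq hu.2)

theorem exists_eigenvector_of_pos {B : Matrix n n ℝ} (hB : ∀ i j, 0 < B i j) {v : n → ℝ}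
    (hv : 0 ≤ v) (hv0 : v ≠ 0) (hvB : v ≤ B *ᵥ v) :
    ∃ t ∈ Set.Icc 1 (∑ i, ∑ j, B i j), ∃ u ∈ stdSimplex ℝ n, B *ᵥ u = t • u := by
  set K : Set (ℝ × (n → ℝ)) := {p | 1 ≤ p.1 ∧ p.2 ∈ stdSimplex ℝ n ∧ p.1 • p.2 ≤ B *ᵥ p.2}
  have hK : IsCompact K := by
    refine (isCompact_Icc.prod (isCompact_stdSimplex ℝ n)).of_isClosed_subset ?_ fun p hp =>
      ⟨⟨hp.1, le_sum_of_smul_le_mulVec (fun i j => (hB i j).le) hp.2.1 hp.2.2⟩, hp.2.1⟩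
    refine (isClosed_le continuous_const continuous_fst).inter
      (((isClosed_stdSimplex ℝ n).preimage continuous_snd).inter
        (isClosed_le (f := fun p : ℝ × (n → ℝ) => p.1 • p.2) ?_ ?_)) <;> fun_prop
  obtain ⟨j, hj⟩ := Function.ne_iff.1 hv0
  have hsum : 0 < ∑ i, v i :=
    sum_pos' (fun i _ => hv i) ⟨j, mem_univ j, (hv j).lt_of_ne' hj⟩
  have hvK : (1, (∑ i, v i)⁻¹ • v) ∈ K := ⟨le_rfl, inv_sum_smul_mem_stdSimplex hv hsum, by
    simpa [mulVec_smul] using smul_le_smul_of_nonneg_left hvB (inv_nonneg.2 hsum.le)⟩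
  obtain ⟨⟨t, u⟩, ⟨ht1, hu, htu⟩, hmax⟩ :=
    hK.exists_isMaxOn ⟨_, hvK⟩ continuous_fst.continuousOn
  refine ⟨t, ⟨ht1, le_sum_of_smul_le_mulVec (fun i j => (hB i j).le) hu htu⟩, u, hu, ?_⟩
  by_contra hne
  -- Otherwise `w = B u` satisfies `t w < B w` in every coordinate, so `t` was not maximal.
  set w := B *ᵥ u
  have hw : ∀ i, 0 < w i := mulVec_pos_of_pos hB hu.1 (fun h => by simpa [h] using hu.2)
  have hlt : ∀ i, t * w i < (B *ᵥ w) i := fun i => by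
    have := mulVec_pos_of_pos hB (sub_nonneg.2 htu) (sub_ne_zero.2 hne) i
    simpa [w, mulVec_sub, mulVec_smul] using this
  obtain ⟨ε, hε, hεw⟩ : ∃ ε > 0, ∀ i, (t + ε) * w i < (B *ᵥ w) i := by
    have : ∀ᶠ ε in 𝓝 (0 : ℝ), ∀ i, (t + ε) * w i < (B *ᵥ w) i :=
      eventually_all.2 fun i => (continuous_const.add continuous_id |>.mul continuous_const
        |>.tendsto 0).eventually (gt_mem_nhds (by simpa using hlt i))
    obtain ⟨ε, hε, hεpos⟩ := ((this.filter_mono nhdsWithin_le_nhds).and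
      (self_mem_nhdsWithin (s := Set.Ioi 0))).exists
    exact ⟨ε, hεpos, hε⟩
  have hwsum : 0 < ∑ i, w i := sum_pos (fun i _ => hw i) ⟨j, mem_univ j⟩
  have hwK : (t + ε, (∑ i, w i)⁻¹ • w) ∈ K := by
    refine ⟨by linarith, inv_sum_smul_mem_stdSimplex (fun i => (hw i).le) hwsum, fun i => ?_⟩
    simpa [mulVec_smul, mul_left_comm _ (∑ i, w i)⁻¹] using
      mul_le_mul_of_nonneg_left (hεw i).le (inv_nonneg.2 hwsum.le)
  linarith [show t + ε ≤ t from hmax hwK]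

theorem exists_one_le_mem_spectrum_of_le_mulVec [DecidableEq n] {Q : Matrix n n ℝ}
    (hQ : ∀ i j, 0 ≤ Q i j) {v : n → ℝ} (hv : 0 ≤ v) (hv0 : v ≠ 0) (hvQ : v ≤ Q *ᵥ v) :
    ∃ t, 1 ≤ t ∧ t ∈ spectrum ℝ Q := by
  -- The positive perturbations `Q + s` (entrywise), `0 < s ≤ 1`, have eigenvalues in `[1, M]`;
  -- a compactness argument lets `s` go to `0`.
  set B : ℝ → Matrix n n ℝ := fun s => Q + s • of fun _ _ => 1
  set M := ∑ i, ∑ j, (Q i j + 1)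
  set F : Set (ℝ × ℝ) :=
    (Set.Icc 0 1 ×ˢ Set.Icc 1 M) ∩ {p | (p.2 • 1 - B p.1).det = 0}
  have hF : IsCompact F :=
    (isCompact_Icc.prod isCompact_Icc).inter_right (isClosed_eq (by fun_prop) continuous_const)
  have hsub : Set.Ioc 0 1 ⊆ Prod.fst '' F := by
    intro s hs
    have hBpos : ∀ i j, 0 < B s i j := fun i j => by
      simpa [B] using add_pos_of_nonneg_of_pos (hQ i j) hs.1
    have hvB : v ≤ B s *ᵥ v := by
      rw [add_mulVec]
      exact hvQ.trans <| le_add_of_nonneg_right <|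
        mulVec_nonneg_of_nonneg (fun _ _ => by simpa using hs.1.le) hv
    obtain ⟨t, ht, u, hu, hBu⟩ := exists_eigenvector_of_pos hBpos hv hv0 hvB
    refine ⟨(s, t), ⟨⟨Set.Ioc_subset_Icc_self hs, ht.1, ht.2.trans ?_⟩, ?_⟩, rfl⟩
    · exact sum_le_sum fun i _ => sum_le_sum fun j _ => by simpa [B] using hs.2
    · refine exists_mulVec_eq_zero_iff.1 ⟨u, fun h => by simpa [h] using hu.2, ?_⟩
      simp [sub_mulVec, hBu, smul_mulVec]
  obtain ⟨⟨_, t⟩, ⟨⟨-, ht, -⟩, hdet⟩, rfl⟩ : (0 : ℝ) ∈ Prod.fst '' F :=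
    (hF.image continuous_fst).isClosed.closure_subset_iff.2 hsub
      (by rw [closure_Ioc zero_ne_one]; simp)
  refine ⟨t, ht, ?_⟩
  rw [mem_spectrum_iff_isRoot_charpoly, Polynomial.IsRoot, eval_charpoly]
  simpa [B, smul_one_eq_diagonal] using hdet

theorem one_le_spectralRadius_of_le_mulVec [DecidableEq n] {Q : Matrix n n ℝ}
    (hQ : ∀ i j, 0 ≤ Q i j) {v : n → ℝ} (hv : 0 ≤ v) (hv0 : v ≠ 0) (hvQ : v ≤ Q *ᵥ v) :
    1 ≤ spectralRadius ℝ Q := by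
  obtain ⟨t, ht, hmem⟩ := exists_one_le_mem_spectrum_of_le_mulVec hQ hv hv0 hvQ
  calc (1 : ENNReal) ≤ ‖t‖₊ := by
        rw [ENNReal.one_le_coe_iff, ← NNReal.coe_le_coe]
        simpa [abs_of_nonneg (zero_le_one.trans ht)] using ht
    _ ≤ spectralRadius ℝ Q :=
        le_iSup₂ (f := fun k (_ : k ∈ spectrum ℝ Q) => (‖k‖₊ : ENNReal)) t hmem

theorem exists_norm_le_of_le_mulVec_add [DecidableEq n] {Q : Matrix n n ℝ}
    (hQ : ∀ i j, 0 ≤ Q i j) (hρ : spectralRadius ℝ Q < 1) (h : n → ℝ) :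
    ∃ C, ∀ y, 0 ≤ y → y ≤ Q *ᵥ y + h → ‖y‖ ≤ C := by
  by_contra! hC
  choose y hy0 hyQ hy using fun k : ℕ => hC k
  -- A limit point of the normalized `y k` is a nonzero subinvariant vector.
  have hmem : ∀ k, ‖y k‖⁻¹ • y k ∈ Metric.sphere (0 : n → ℝ) 1 := fun k => by
    simp [norm_smul, inv_mul_cancel₀ ((Nat.cast_nonneg k).trans_lt (hy k)).ne']
  obtain ⟨w, hw, φ, hφ, hlim⟩ := (isCompact_sphere 0 1).tendsto_subseq hmem
  have hnorm : Tendsto (fun k => ‖y (φ k)‖⁻¹) atTop (𝓝 0) :=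
    tendsto_inv_atTop_zero.comp <| tendsto_atTop_mono (fun k => (hy (φ k)).le)
      (tendsto_natCast_atTop_atTop.comp hφ.tendsto_atTop)
  have hw0 : 0 ≤ w := ge_of_tendsto' hlim fun k => smul_nonneg (by positivity) (hy0 _)
  have hwQ : w ≤ Q *ᵥ w := by
    have hrhs := (((continuous_const (y := Q)).matrix_mulVec continuous_id |>.tendsto w).comp
      hlim).add (hnorm.smul_const h)
    rw [zero_smul, add_zero] at hrhs
    refine le_of_tendsto_of_tendsto' hlim hrhs fun k => ?_
    simpa [mulVec_smul, smul_add] using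
      smul_le_smul_of_nonneg_left (hyQ (φ k)) (inv_nonneg.2 (norm_nonneg (y (φ k))))
  exact (one_le_spectralRadius_of_le_mulVec hQ hw0 (by rintro rfl; simp at hw) hwQ).not_gt hρ

end Matrix

namespace IsSPSol

variable {d : ℕ} {M : Matrix (Fin d) (Fin d) ℝ} {a : Fin d → ℝ} {u y z : ℕ → Fin d → ℝ}

theorem succ (h : IsSPSol M a u y z) (n : ℕ) :
    z (n + 1) = z n + u (n + 1) + M *ᵥ (y (n + 1) - y n) ∧ 0 ≤ z (n + 1) ∧
      y n ≤ y (n + 1) ∧ z (n + 1) ⬝ᵥ (y (n + 1) - y n) = 0 := by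
  obtain ⟨hz, hz0, hy, hdot⟩ := h.2.2 (n + 1) le_add_self
  exact ⟨hz, hz0, fun i => sub_nonneg.1 (hy i), hdot⟩

theorem monotone (h : IsSPSol M a u y z) : Monotone y :=
  monotone_nat_of_le_succ fun n => (h.succ n).2.2.1

theorem nonneg (h : IsSPSol M a u y z) (n : ℕ) : 0 ≤ y n :=
  h.1 ▸ h.monotone n.zero_le

theorem eq_add_sum_add_mulVec (h : IsSPSol M a u y z) (n : ℕ) :
    z n = a + ∑ k ∈ Icc 1 n, u k + M *ᵥ y n := by
  induction n with
  | zero => simp [h.1, h.2.1]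
  | succ n ih =>
    rw [(h.succ n).1, ih, sum_Icc_succ_top (by omega), mulVec_sub]
    abel

theorem eq_zero_of_lt (h : IsSPSol M a u y z) {n : ℕ} {i : Fin d}
    (hlt : y n i < y (n + 1) i) : z (n + 1) i = 0 := by
  obtain ⟨-, hz0, hy, hdot⟩ := h.succ n
  have := (sum_eq_zero_iff_of_nonneg fun j _ => mul_nonneg (hz0 j) (sub_nonneg.2 (hy j))).1
    hdot i (mem_univ i)
  exact (mul_eq_zero.1 this).resolve_right (sub_ne_zero.2 hlt.ne')

variable {Q : Matrix (Fin d) (Fin d) ℝ}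

theorem le_mulVec_sub (h : IsSPSol (1 - Q) 0 u y z) (hQ : ∀ i j, 0 ≤ Q i j) {b : Fin d → ℝ}
    (hb : ∀ n, b ≤ ∑ k ∈ Icc 1 n, u k) (n : ℕ) : y n ≤ Q *ᵥ y n - b := by
  induction n with
  | zero => simpa [h.1] using hb 0
  | succ n ih =>
    intro i
    rcases ((h.succ n).2.2.1 i).lt_or_eq with hlt | heq
    · have hz := congrFun (h.eq_add_sum_add_mulVec (n + 1)) i
      have hbn := hb (n + 1) i
      simp only [h.eq_zero_of_lt hlt, sub_mulVec, one_mulVec, Pi.add_apply, Pi.sub_apply,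
        zero_add] at hz ⊢
      linarith
    · have hQy := mulVec_mono_of_nonneg hQ (h.monotone n.le_succ) i
      have hyn := ih i
      simp only [Pi.sub_apply] at hyn ⊢
      linarith

theorem exists_forall_ge_eq (h : IsSPSol (1 - Q) 0 u y z) (hQ : ∀ i j, 0 ≤ Q i j)
    {C : Fin d → ℝ} (hyC : ∀ n, y n ≤ C)
    (hS : ∀ i, Tendsto (fun n => ∑ k ∈ Icc 1 n, u k i) atTop atTop) :
    ∃ N, ∀ n, N ≤ n → y n = y N := by
  -- Once the partial sums exceed `Q C`, the content `z` stays positive and `y` cannot move.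
  have hz : ∀ᶠ n in atTop, ∀ i, 0 < z n i := eventually_all.2 fun i =>
    ((hS i).eventually_gt_atTop ((Q *ᵥ C) i)).mono fun n hn => by
      have hzn := congrFun (h.eq_add_sum_add_mulVec n) i
      have hQy : (Q *ᵥ y n) i ≤ (Q *ᵥ C) i := mulVec_mono_of_nonneg hQ (hyC n) i
      have hy : 0 ≤ y n i := h.nonneg n i
      simp only [sub_mulVec, one_mulVec, zero_add, Pi.add_apply, Pi.sub_apply,
        Finset.sum_apply] at hzn
      linarith
  obtain ⟨N, hN⟩ := eventually_atTop.1 hz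
  refine ⟨N, fun n hn => ?_⟩
  induction n, hn using Nat.le_induction with
  | base => rfl
  | succ n hn ih =>
    rw [← ih]
    funext i
    refine le_antisymm (not_lt.1 fun hlt => ?_) ((h.succ n).2.2.1 i)
    exact (hN (n + 1) (by omega) i).ne' (h.eq_zero_of_lt hlt)

theorem bounded_and_eventually_const {P : Matrix (Fin d) (Fin d) ℝ} (hP : ∀ i j, 0 ≤ P i j)
    (hρ : spectralRadius ℝ P < 1) (h : IsSPSol (1 - Pᵀ) 0 u y z)
    (hS : ∀ i, Tendsto (fun n => ∑ k ∈ Icc 1 n, u k i) atTop atTop) :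
    (∃ H0 : Fin d → ℝ, ∀ n i, y n i < H0 i) ∧ ∃ N, ∀ n, N ≤ n → y n = y N := by
  have hQ : ∀ i j, 0 ≤ Pᵀ i j := fun i j => hP j i
  have hρ' : spectralRadius ℝ Pᵀ < 1 := by rwa [spectralRadius, spectrum_transpose]
  choose b hb using fun i => bddBelow_range_of_tendsto_atTop_atTop (hS i)
  have hbS : ∀ n, b ≤ ∑ k ∈ Icc 1 n, u k := fun n i => by
    simpa only [Finset.sum_apply] using hb i ⟨n, rfl⟩
  obtain ⟨C, hC⟩ := exists_norm_le_of_le_mulVec_add hQ hρ' (-b)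
  have hyC : ∀ n i, y n i ≤ C := fun n i =>
    (Real.le_norm_self _).trans <| (norm_le_pi_norm (y n) i).trans <|
      hC _ (h.nonneg n) (by simpa only [sub_eq_add_neg] using h.le_mulVec_sub hQ hbS n)
  exact ⟨⟨fun _ => C + 1, fun n i => (hyC n i).trans_lt (lt_add_one C)⟩,
    h.exists_forall_ge_eq hQ (fun n i => hyC n i) hS⟩

end IsSPSol

theorem tendsto_sum_Icc_atTop_of_tendsto_average {g : ℕ → ℝ} {m : ℝ} (hm : 0 < m)
    (hg : Tendsto (fun n : ℕ => (∑ k ∈ range n, g k) / n) atTop (𝓝 m)) :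
    Tendsto (fun n => ∑ k ∈ Icc 1 n, g k) atTop atTop := by
  have hsum : Tendsto (fun n : ℕ => ∑ k ∈ range n, g k) atTop atTop :=
    (tendsto_natCast_atTop_atTop.atTop_mul_pos hm hg).congr' <|
      (eventually_ne_atTop 0).mono fun n hn => mul_div_cancel₀ _ (Nat.cast_ne_zero.2 hn)
  have hIcc : ∀ n, ∑ k ∈ Icc 1 n, g k = ∑ k ∈ range (n + 1), g k - g 0 := fun n => by
    rw [range_eq_Ico, sum_eq_sum_Ico_succ_bot n.succ_pos, zero_add, Nat.succ_eq_add_one,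
      Ico_add_one_right_eq_Icc, add_sub_cancel_left]
  simpa only [hIcc, sub_eq_add_neg, Function.comp_def] using
    tendsto_atTop_add_const_right _ (-g 0) (hsum.comp (tendsto_add_atTop_nat 1))

theorem stmt_13_general {d : ℕ} {Ω : Type*} [MeasurableSpace Ω]
    (μ : Measure Ω)
    (P : Matrix (Fin d) (Fin d) ℝ)
    (hnonneg : ∀ i j, 0 ≤ P i j)
    (hspec : spectralRadius ℝ P < 1)
    (A : ℕ → Ω → ℝ) (X : ℕ → Ω → Fin d → ℝ) (c : Fin d → ℝ)
    (hAiid : iIndepFun A μ)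
    (hAid : ∀ n, IdentDistrib (A n) (A 0) μ μ)
    (hXiid : iIndepFun X μ)
    (hXid : ∀ n, IdentDistrib (X n) (X 0) μ μ)
    (hAint : Integrable (A 0) μ)
    (hXint : ∀ i, Integrable (fun ω => X 0 ω i) μ)
    (hnet : ∀ i, 0 < ∫ ω, (c i * A 0 ω - X 0 ω i) ∂μ)
    (Y Z : ℕ → Ω → Fin d → ℝ)
    (hSP : ∀ ω, IsSPSol (1 - Pᵀ) 0 (fun n => A n ω • c - X n ω)
      (fun n => Y n ω) (fun n => Z n ω)) :
    ∀ᵐ ω ∂μ, (∃ H0 : Fin d → ℝ, ∀ n i, Y n ω i < H0 i) ∧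
      ∃ N, ∀ n, N ≤ n → Y n ω = Y N ω := by
  have hA := strong_law_ae_real A hAint (fun _ _ hij => hAiid.indepFun hij) hAid
  have hX : ∀ i, ∀ᵐ ω ∂μ, Tendsto (fun n : ℕ => (∑ k ∈ range n, X k ω i) / n) atTop
      (𝓝 μ[fun ω => X 0 ω i]) := fun i =>
    strong_law_ae_real _ (hXint i)
      (fun _ _ hmn => (hXiid.indepFun hmn).comp (measurable_pi_apply i) (measurable_pi_apply i))
      fun n => (hXid n).comp (measurable_pi_apply i)
  filter_upwards [hA, ae_all_iff.2 hX] with ω hAω hXω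
  refine (hSP ω).bounded_and_eventually_const hnonneg hspec fun i =>
    tendsto_sum_Icc_atTop_of_tendsto_average (hnet i) ?_
  rw [integral_sub (hAint.const_mul _) (hXint i), integral_const_mul]
  convert (hAω.const_mul (c i)).sub (hXω i) using 2 with n
  simp only [Pi.sub_apply, Pi.smul_apply, smul_eq_mul, sum_sub_distrib, sub_div, ← sum_mul]
  ring

theorem stmt_13 {d : ℕ} {Ω : Type*} [MeasurableSpace Ω]
    (μ : Measure Ω) [IsProbabilityMeasure μ]
    (P : Matrix (Fin d) (Fin d) ℝ)
    (hdiag : ∀ i, P i i = 0) (hnonneg : ∀ i j, 0 ≤ P i j)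
    (hspec : spectralRadius ℝ P < 1)
    (A : ℕ → Ω → ℝ) (X : ℕ → Ω → Fin d → ℝ) (c : Fin d → ℝ)
    (hAmeas : ∀ n, Measurable (A n)) (hXmeas : ∀ n, Measurable (X n))
    (hApos : ∀ n ω, 0 < A n ω) (hXnonneg : ∀ n ω i, 0 ≤ X n ω i)
    (hAiid : iIndepFun A μ)
    (hAid : ∀ n, IdentDistrib (A n) (A 0) μ μ)
    (hXiid : iIndepFun X μ)
    (hXid : ∀ n, IdentDistrib (X n) (X 0) μ μ)
    (hAX : IndepFun (fun ω => fun n => A n ω) (fun ω => fun n => X n ω) μ)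
    (hc : ∀ i, 0 < c i)
    (hAint : Integrable (A 0) μ)
    (hXint : ∀ i, Integrable (fun ω => X 0 ω i) μ)
    (hnet : ∀ i, 0 < ∫ ω, (c i * A 0 ω - X 0 ω i) ∂μ)
    (Y Z : ℕ → Ω → Fin d → ℝ)
    (hSP : ∀ ω, IsSPSol (1 - Pᵀ) 0 (fun n => A n ω • c - X n ω)
      (fun n => Y n ω) (fun n => Z n ω)) :
    ∀ᵐ ω ∂μ, (∃ H0 : Fin d → ℝ, ∀ n i, Y n ω i < H0 i) ∧
      ∃ N, ∀ n, N ≤ n → Y n ω = Y N ω :=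
  stmt_13_general μ P hnonneg hspec A X c hAiid hAid hXiid hXid hAint hXint hnet Y Z hSP
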